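/- Let σ_t > 0, 0 < σ̃_A < σ̃_B, k > 0, and c > 0 with c < (σ_t²/σ̃_B)·(2π)^(−1/2). For i ∈ {A, B} define P_i(τ) = Φᶜ(τ/σ̃_i), E_i(τ) = (σ_t²/σ̃_i)·H(τ/σ̃_i), and the objective U(n_A, τ_A, n_B, τ_B) = n_A·P_A(τ_A)·E_A(τ_A) + n_B·P_B(τ_B)·E_B(τ_B) − c·(n_A + n_B) over the feasible set {n_A, n_B ≥ 0, n_A·P_A(τ_A) + n_B·P_B(τ_B) ≤ k}. Let z_A* be the unique zero of z ↦ (σ_t²/σ̃_A)·(φ(z) − z·Φᶜ(z)) − c and τ_A* = σ̃_A·z_A*. Then the supremum of U over the feasible set equals k·(σ_t²/σ̃_A)·z_A*, it is attained at (n_A, τ_A, n_B, τ_B) = (k/P_A(τ_A*), τ_A*, 0, τ_B) for any τ_B, and every feasible point with n_B > 0 has U strictly below this supremum; i.e., at any optimal solution no applicant from group B is reviewed or hired. -/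

import Mathlib

/-!
Put `λ = (σ_t²/σ̃_A)·z_A*` as the price of one unit of hiring capacity. Reviewing one group-`i`
applicant at normalized threshold `z` earns `(σ_t²/σ̃_i)·φ(z) - c` and uses `Φᶜ(z)` units of
capacity. Since `φ(z) - z_A*·Φᶜ(z)` is maximized at `z = z_A*`, where it equals the normal loss
`L(z_A*) = c·σ̃_A/σ_t²`, the net earnings of a group-`A` review never exceed `λ·Φᶜ(z)`, and
those of a group-`B` review fall strictly below it because `σ_t²/σ̃_B < σ_t²/σ̃_A`. Summing over
the reviews and using the capacity constraint bounds `U` by `λ·k`, with equality for the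
group-`A`-only policy at threshold `τ_A*`. The price is nonnegative because
`c < σ_t²/(σ̃_A·√(2π)) = (σ_t²/σ̃_A)·L(0)` and `L` is decreasing, so `z_A* > 0`.
-/

open MeasureTheory ProbabilityTheory Real

/-- Standard normal density. -/
noncomputable def stdPdf (x : ℝ) : ℝ := (Real.sqrt (2 * Real.pi))⁻¹ * Real.exp (-(x ^ 2) / 2)

/-- Standard normal CDF. -/
noncomputable def stdCdf (x : ℝ) : ℝ := ∫ u in Set.Iic x, stdPdf u

/-- Standard normal complementary CDF. -/
noncomputable def stdCcdf (x : ℝ) : ℝ := 1 - stdCdf x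

/-- Standard normal hazard rate. -/
noncomputable def hazard (x : ℝ) : ℝ := stdPdf x / stdCcdf x

/-- Group-i selection probability at threshold `τ`: `P_i(τ) = Φᶜ(τ/σ̃_i)`. -/
noncomputable def Pgrp (σtl τ : ℝ) : ℝ := stdCcdf (τ / σtl)

/-- Expected true quality of a group-i hire at threshold `τ`: `E_i(τ) = (σ_t²/σ̃_i)·H(τ/σ̃_i)`. -/
noncomputable def Egrp (σt σtl τ : ℝ) : ℝ := σt ^ 2 / σtl * hazard (τ / σtl)

/-- Principal's overall objective when reviewing `n_A, n_B` applications from each group at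
thresholds `τ_A, τ_B`. -/
noncomputable def Uobj (σt σtA σtB c nA τA nB τB : ℝ) : ℝ :=
  nA * Pgrp σtA τA * Egrp σt σtA τA + nB * Pgrp σtB τB * Egrp σt σtB τB - c * (nA + nB)

lemma stdPdf_eq_gaussianPDFReal : stdPdf = gaussianPDFReal 0 1 := by
  ext x
  simp [stdPdf, gaussianPDFReal]

lemma stdPdf_pos (x : ℝ) : 0 < stdPdf x := by
  unfold stdPdf
  positivity

lemma integrable_stdPdf : Integrable stdPdf := by
  rw [stdPdf_eq_gaussianPDFReal]
  exact integrable_gaussianPDFReal 0 1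

lemma stdCcdf_eq_integral_Ioi (x : ℝ) : stdCcdf x = ∫ u in Set.Ioi x, stdPdf u := by
  have h := intervalIntegral.integral_Iic_add_Ioi (b := x) integrable_stdPdf.integrableOn
    integrable_stdPdf.integrableOn
  rw [stdPdf_eq_gaussianPDFReal, integral_gaussianPDFReal_eq_one 0 one_ne_zero] at h
  rw [stdCcdf, stdCdf, stdPdf_eq_gaussianPDFReal]
  linarith

lemma stdCcdf_pos (x : ℝ) : 0 < stdCcdf x := by
  rw [stdCcdf_eq_integral_Ioi, setIntegral_pos_iff_support_of_nonneg_ae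
    (.of_forall fun y => (stdPdf_pos y).le) integrable_stdPdf.integrableOn]
  have : Function.support stdPdf ∩ Set.Ioi x = Set.Ioi x :=
    Set.inter_eq_right.mpr fun y _ => (stdPdf_pos y).ne'
  simp [this]

lemma hasDerivAt_stdCdf (x : ℝ) : HasDerivAt stdCdf (stdPdf x) x := by
  have hcont : Continuous stdPdf := by unfold stdPdf; fun_prop
  have hsplit : ∀ y, stdCdf 0 + ∫ t in (0 : ℝ)..y, stdPdf t = stdCdf y := fun y => by
    rw [stdCdf, stdCdf, ← intervalIntegral.integral_Iic_sub_Iic integrable_stdPdf.integrableOn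
      integrable_stdPdf.integrableOn]
    ring
  refine ((intervalIntegral.integral_hasDerivAt_right integrable_stdPdf.intervalIntegrable
    hcont.aestronglyMeasurable.stronglyMeasurableAtFilter hcont.continuousAt).const_add
    (stdCdf 0)).congr_of_eventuallyEq (.of_forall fun y => (hsplit y).symm)

lemma hasDerivAt_stdCcdf (x : ℝ) : HasDerivAt stdCcdf (-stdPdf x) x :=
  (hasDerivAt_stdCdf x).const_sub 1

lemma hasDerivAt_stdPdf (x : ℝ) : HasDerivAt stdPdf (-x * stdPdf x) x := by
  have h : HasDerivAt (fun y : ℝ => -(y ^ 2) / 2) (-x) x :=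
    ((hasDerivAt_pow 2 x).neg.div_const 2).congr_deriv (by ring)
  unfold stdPdf
  exact (h.exp.const_mul _).congr_deriv (by ring)

/-- The standard normal loss function `L(z) = E[(X - z)⁺] = φ(z) - z Φᶜ(z)`. -/
noncomputable def stdLoss (z : ℝ) : ℝ := stdPdf z - z * stdCcdf z

lemma hasDerivAt_stdLoss (x : ℝ) : HasDerivAt stdLoss (-stdCcdf x) x :=
  ((hasDerivAt_stdPdf x).sub ((hasDerivAt_id x).mul (hasDerivAt_stdCcdf x))).congr_deriv
    (by simp only [id]; ring)

lemma stdLoss_strictAnti : StrictAnti stdLoss :=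
  strictAnti_of_hasDerivAt_neg hasDerivAt_stdLoss fun x => neg_neg_of_pos (stdCcdf_pos x)

lemma stdLoss_zero : stdLoss 0 = (Real.sqrt (2 * Real.pi))⁻¹ := by
  simp [stdLoss, stdPdf]

/-- `φ(z) - m Φᶜ(z)` has derivative `(m - z) φ(z)`, so it peaks at `z = m`. -/
lemma stdPdf_sub_mul_stdCcdf_le_stdLoss (m z : ℝ) : stdPdf z - m * stdCcdf z ≤ stdLoss m := by
  set f : ℝ → ℝ := fun y => stdPdf y - m * stdCcdf y
  have hf : ∀ y, HasDerivAt f ((m - y) * stdPdf y) y := fun y =>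
    ((hasDerivAt_stdPdf y).sub ((hasDerivAt_stdCcdf y).const_mul m)).congr_deriv (by ring)
  have hfc : Continuous f := continuous_iff_continuousAt.mpr fun y => (hf y).continuousAt
  show f z ≤ f m
  rcases le_total z m with hzm | hmz
  · refine monotoneOn_of_hasDerivWithinAt_nonneg (convex_Iic m) hfc.continuousOn
      (fun y _ => (hf y).hasDerivWithinAt) (fun y hy => ?_) hzm Set.self_mem_Iic hzm
    rw [interior_Iic] at hy
    exact mul_nonneg (sub_nonneg.mpr (le_of_lt hy)) (stdPdf_pos y).le
  · refine antitoneOn_of_hasDerivWithinAt_nonpos (convex_Ici m) hfc.continuousOn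
      (fun y _ => (hf y).hasDerivWithinAt) (fun y hy => ?_) Set.self_mem_Ici hmz hmz
    rw [interior_Ici] at hy
    exact mul_nonpos_of_nonpos_of_nonneg (sub_nonpos.mpr (le_of_lt hy)) (stdPdf_pos y).le

section ThresholdGain

variable {S c m : ℝ}

lemma pos_of_mul_stdLoss_eq (hS : 0 < S) (hm : S * stdLoss m = c)
    (hc : c < S / Real.sqrt (2 * Real.pi)) : 0 < m := by
  refine stdLoss_strictAnti.lt_iff_gt.mp (lt_of_mul_lt_mul_left ?_ hS.le)
  rwa [stdLoss_zero, ← div_eq_mul_inv, hm]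

lemma mul_stdPdf_sub_le (hS : 0 ≤ S) (hm : S * stdLoss m = c) (z : ℝ) :
    S * stdPdf z - c ≤ S * m * stdCcdf z := by
  linarith [mul_le_mul_of_nonneg_left (stdPdf_sub_mul_stdCcdf_le_stdLoss m z) hS]

lemma mul_stdPdf_sub_lt {S' : ℝ} (hS' : S' < S) (hS : 0 ≤ S) (hm : S * stdLoss m = c) (z : ℝ) :
    S' * stdPdf z - c < S * m * stdCcdf z := by
  linarith [mul_stdPdf_sub_le hS hm z, mul_lt_mul_of_pos_right hS' (stdPdf_pos z)]

end ThresholdGain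

lemma Pgrp_pos (σtl τ : ℝ) : 0 < Pgrp σtl τ := stdCcdf_pos _

lemma Pgrp_mul_left {σtl : ℝ} (hσ : σtl ≠ 0) (z : ℝ) : Pgrp σtl (σtl * z) = stdCcdf z := by
  rw [Pgrp, mul_div_cancel_left₀ z hσ]

lemma Pgrp_mul_Egrp (σt σtl τ : ℝ) :
    Pgrp σtl τ * Egrp σt σtl τ = σt ^ 2 / σtl * stdPdf (τ / σtl) := by
  rw [Pgrp, Egrp, hazard, mul_left_comm, mul_div_cancel₀ _ (stdCcdf_pos _).ne']

lemma Uobj_eq (σt σtA σtB c nA τA nB τB : ℝ) :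
    Uobj σt σtA σtB c nA τA nB τB =
      nA * (Pgrp σtA τA * Egrp σt σtA τA - c) + nB * (Pgrp σtB τB * Egrp σt σtB τB - c) := by
  rw [Uobj]
  ring

theorem no_hire_from_noisy_group_general (σt σtA σtB c k zA : ℝ)
    (hσt : 0 < σt) (hA : 0 < σtA) (hAB : σtA < σtB) (hk : 0 < k)
    (hviable : c < σt ^ 2 / σtB / Real.sqrt (2 * Real.pi))
    (hzA : σt ^ 2 / σtA * (stdPdf zA - zA * stdCcdf zA) - c = 0) :
    (∀ nA τA nB τB : ℝ, 0 ≤ nA → 0 ≤ nB →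
        nA * Pgrp σtA τA + nB * Pgrp σtB τB ≤ k →
        Uobj σt σtA σtB c nA τA nB τB ≤ k * (σt ^ 2 / σtA) * zA) ∧
    (∀ τB : ℝ,
        (0 ≤ k / Pgrp σtA (σtA * zA) ∧ (0:ℝ) ≤ 0 ∧
          (k / Pgrp σtA (σtA * zA)) * Pgrp σtA (σtA * zA) + 0 * Pgrp σtB τB ≤ k) ∧
        Uobj σt σtA σtB c (k / Pgrp σtA (σtA * zA)) (σtA * zA) 0 τB
          = k * (σt ^ 2 / σtA) * zA) ∧
    (∀ nA τA nB τB : ℝ, 0 ≤ nA → 0 < nB →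
        nA * Pgrp σtA τA + nB * Pgrp σtB τB ≤ k →
        Uobj σt σtA σtB c nA τA nB τB < k * (σt ^ 2 / σtA) * zA) := by
  have hSA : 0 < σt ^ 2 / σtA := by positivity
  have hSBA : σt ^ 2 / σtB < σt ^ 2 / σtA := div_lt_div_of_pos_left (by positivity) hA hAB
  have hzA' : σt ^ 2 / σtA * stdLoss zA = c := sub_eq_zero.mp hzA
  have hprice : 0 ≤ σt ^ 2 / σtA * zA := mul_nonneg hSA.le <| (pos_of_mul_stdLoss_eq hSA hzA' <|
    hviable.trans (div_lt_div_of_pos_right hSBA (by positivity))).le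
  have gainA : ∀ τ, Pgrp σtA τ * Egrp σt σtA τ - c ≤ σt ^ 2 / σtA * zA * Pgrp σtA τ :=
    fun τ => by rw [Pgrp_mul_Egrp]; exact mul_stdPdf_sub_le hSA.le hzA' _
  have gainB : ∀ τ, Pgrp σtB τ * Egrp σt σtB τ - c < σt ^ 2 / σtA * zA * Pgrp σtB τ :=
    fun τ => by rw [Pgrp_mul_Egrp]; exact mul_stdPdf_sub_lt hSBA hSA.le hzA' _
  refine ⟨fun nA τA nB τB hnA hnB hfeas => ?_, fun τB => ⟨⟨?_, le_rfl, ?_⟩, ?_⟩,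
    fun nA τA nB τB hnA hnB hfeas => ?_⟩
  · rw [Uobj_eq]
    linarith [mul_le_mul_of_nonneg_left (gainA τA) hnA,
      mul_le_mul_of_nonneg_left (gainB τB).le hnB, mul_le_mul_of_nonneg_left hfeas hprice]
  · exact div_nonneg hk.le (Pgrp_pos _ _).le
  · rw [div_mul_cancel₀ _ (Pgrp_pos _ _).ne', zero_mul, add_zero]
  · rw [Uobj_eq, zero_mul, add_zero, Pgrp_mul_Egrp, mul_div_cancel_left₀ _ hA.ne',
      Pgrp_mul_left hA.ne']
    have hgain : σt ^ 2 / σtA * stdPdf zA - c = σt ^ 2 / σtA * zA * stdCcdf zA := by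
      rw [← hzA', stdLoss]
      ring
    rw [hgain]
    field_simp [(stdCcdf_pos zA).ne']
  · rw [Uobj_eq]
    linarith [mul_le_mul_of_nonneg_left (gainA τA) hnA,
      mul_lt_mul_of_pos_left (gainB τB) hnB, mul_le_mul_of_nonneg_left hfeas hprice]

/-- Disparate variance model: at the optimum of the joint two-group problem, no applicant from
the noisier group `B` is reviewed or hired. The supremum of the objective over the feasible
set equals `k·(σ_t²/σ̃_A)·z_A*`, it is attained with `n_B = 0` at threshold `τ_A* = σ̃_A·z_A*`,
and every feasible point with `n_B > 0` is strictly suboptimal. -/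
theorem no_hire_from_noisy_group (σt σtA σtB c k zA : ℝ)
    (hσt : 0 < σt) (hA : 0 < σtA) (hAB : σtA < σtB) (hk : 0 < k)
    (hc : 0 < c) (hviable : c < σt ^ 2 / σtB / Real.sqrt (2 * Real.pi))
    (hzA : σt ^ 2 / σtA * (stdPdf zA - zA * stdCcdf zA) - c = 0) :
    (∀ nA τA nB τB : ℝ, 0 ≤ nA → 0 ≤ nB →
        nA * Pgrp σtA τA + nB * Pgrp σtB τB ≤ k →
        Uobj σt σtA σtB c nA τA nB τB ≤ k * (σt ^ 2 / σtA) * zA) ∧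
    (∀ τB : ℝ,
        (0 ≤ k / Pgrp σtA (σtA * zA) ∧ (0:ℝ) ≤ 0 ∧
          (k / Pgrp σtA (σtA * zA)) * Pgrp σtA (σtA * zA) + 0 * Pgrp σtB τB ≤ k) ∧
        Uobj σt σtA σtB c (k / Pgrp σtA (σtA * zA)) (σtA * zA) 0 τB
          = k * (σt ^ 2 / σtA) * zA) ∧
    (∀ nA τA nB τB : ℝ, 0 ≤ nA → 0 < nB →
        nA * Pgrp σtA τA + nB * Pgrp σtB τB ≤ k →
        Uobj σt σtA σtB c nA τA nB τB < k * (σt ^ 2 / σtA) * zA) :=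
  no_hire_from_noisy_group_general σt σtA σtB c k zA hσt hA hAB hk hviable hzA
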